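/- arXiv:2010.02389 — 5 statements merged into one kernel-verified Lean document; each statement's English description precedes it below -/
import Mathlib

section
/- The number of Motzkin paths of length n avoiding upward-runs, downward-runs, and flat-runs of length 1, for n = 0,...,11, is 1, 0, 1, 1, 2, 1, 5, 4, 12, 13, 34, 38. -/
inductive Step : Type
  | U : Step
  | D : Step
  | F : Step
  deriving DecidableEq

open Step

/-- A Motzkin path: every prefix has at least as many `U`s as `D`s,
and the whole word has equally many `U`s and `D`s. -/
def IsMotzkin (w : List Step) : Prop :=
  (∀ p : List Step, p <+: w → p.count D ≤ p.count U) ∧ w.count U = w.count D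

/-- The number of Motzkin paths of length `n`. -/
noncomputable def motzkinNum (n : ℕ) : ℕ :=
  Nat.card {w : List Step // w.length = n ∧ IsMotzkin w}

/-- The word `w` contains a maximal run of the letter `s` of length exactly `k`. -/
def HasRun (w : List Step) (s : Step) (k : ℕ) : Prop :=
  ∃ a b : List Step,
    w = a ++ List.replicate k s ++ b ∧ a.getLast? ≠ some s ∧ b.head? ≠ some s


/-!
Both conditions can be checked letter by letter by a deterministic automaton whose transitions
may fail: the Motzkin condition by tracking the height (a `D` at height `0` fails, acceptance
means height `0`), and the absence of runs of length one by remembering the last letter together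
with whether it already has an equal left neighbour (a letter change fails when it has not).
The number of words of length `n` accepted from a state satisfies a recursion over the first
letter; for the product automaton the kernel evaluates it for `n ≤ 11`, the failing transitions
pruning it to the prefixes that are still admissible.
-/

structure PartialDFA (α σ : Type*) where
  next : σ → α → Option σ
  accept : σ → Bool

namespace PartialDFA

variable {α σ τ : Type*}

def accepts (M : PartialDFA α σ) : σ → List α → Bool
  | s, [] => M.accept s
  | s, a :: w => (M.next s a).any (M.accepts · w)

@[simps]
def prod (M : PartialDFA α σ) (N : PartialDFA α τ) : PartialDFA α (σ × τ) where
  next q a := Option.map₂ Prod.mk (M.next q.1 a) (N.next q.2 a)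
  accept q := M.accept q.1 && N.accept q.2

theorem accepts_prod (M : PartialDFA α σ) (N : PartialDFA α τ) (s : σ) (t : τ) (w : List α) :
    (M.prod N).accepts (s, t) w = (M.accepts s w && N.accepts t w) := by
  induction w generalizing s t with
  | nil => rfl
  | cons a w ih =>
    cases hM : M.next s a <;> cases hN : N.next t a <;> simp [accepts, hM, hN, ih]

def countAccepted [FinEnum α] (M : PartialDFA α σ) : ℕ → σ → ℕ
  | 0, s => if M.accept s then 1 else 0
  | n + 1, s => ((FinEnum.toList α).map fun a => (M.next s a).elim 0 (M.countAccepted n)).sum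

end PartialDFA

section Words

variable (α : Type*) [FinEnum α]

def wordsOfLength : ℕ → List (List α)
  | 0 => [[]]
  | n + 1 => (FinEnum.toList α).flatMap fun a => (wordsOfLength n).map (a :: ·)

variable {α}

theorem mem_wordsOfLength {n : ℕ} {w : List α} : w ∈ wordsOfLength α n ↔ w.length = n := by
  induction n generalizing w with
  | zero => simp [wordsOfLength]
  | succ n ih => cases w <;> simp [wordsOfLength, ih]

theorem nodup_wordsOfLength (n : ℕ) : (wordsOfLength α n).Nodup := by
  induction n with
  | zero => simp [wordsOfLength]
  | succ n ih =>
    refine List.nodup_flatMap.mpr ⟨fun a _ => ih.map List.cons_injective, ?_⟩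
    refine FinEnum.nodup_toList.imp fun hab => ?_
    simp [List.disjoint_left, hab.symm]

theorem countP_wordsOfLength_succ (p : List α → Bool) (n : ℕ) :
    (wordsOfLength α (n + 1)).countP p =
      ((FinEnum.toList α).map fun a => (wordsOfLength α n).countP fun w => p (a :: w)).sum := by
  simp [wordsOfLength, List.countP_flatMap, Function.comp_def]

theorem card_eq_countP_wordsOfLength (p : List α → Bool) (n : ℕ) :
    Nat.card {w : List α // w.length = n ∧ p w} = (wordsOfLength α n).countP p := by
  rw [List.countP_eq_length_filter,
    ← List.toFinset_card_of_nodup ((nodup_wordsOfLength n).filter p),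
    ← Fintype.card_coe, ← Nat.card_eq_fintype_card]
  exact Nat.card_congr (Equiv.subtypeEquivRight fun w => by simp [mem_wordsOfLength])

end Words

namespace PartialDFA

variable {α σ : Type*} [FinEnum α]

theorem countAccepted_eq_countP (M : PartialDFA α σ) (n : ℕ) (s : σ) :
    M.countAccepted n s = (wordsOfLength α n).countP (M.accepts s) := by
  induction n generalizing s with
  | zero => cases h : M.accept s <;> simp [countAccepted, wordsOfLength, accepts, h]
  | succ n ih =>
    rw [countP_wordsOfLength_succ, countAccepted]
    congr 1
    refine List.map_congr_left fun a _ => ?_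
    cases h : M.next s a <;> simp [accepts, ih, h]

theorem card_accepts (M : PartialDFA α σ) (n : ℕ) (s : σ) :
    Nat.card {w : List α // w.length = n ∧ M.accepts s w} = M.countAccepted n s := by
  rw [card_eq_countP_wordsOfLength, countAccepted_eq_countP]

end PartialDFA

theorem List.forall_prefix_cons_iff {α : Type*} {P : List α → Prop} {a : α} {t : List α} :
    (∀ p, p <+: a :: t → P p) ↔ P [] ∧ ∀ q, q <+: t → P (a :: q) := by
  simp only [List.prefix_cons_iff]
  aesop

instance : FinEnum Step :=
  FinEnum.ofNodupList [U, D, F] (fun s => by cases s <;> simp) (by decide)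

theorem Step.forall_step {P : Step → Prop} : (∀ s, P s) ↔ P U ∧ P D ∧ P F :=
  ⟨fun h => ⟨h U, h D, h F⟩, fun ⟨hU, hD, hF⟩ s => by cases s <;> assumption⟩

@[simps]
def heightDFA : PartialDFA Step ℕ where
  next
    | h, U => some (h + 1)
    | 0, D => none
    | h + 1, D => some h
    | h, F => some h
  accept h := h == 0

theorem heightDFA_accepts_iff (w : List Step) (h : ℕ) :
    heightDFA.accepts h w ↔
      (∀ p, p <+: w → p.count D ≤ p.count U + h) ∧ w.count D = w.count U + h := by
  induction w generalizing h with
  | nil => simp [PartialDFA.accepts]; omega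
  | cons a t ih =>
    rw [List.forall_prefix_cons_iff]
    cases a with
    | U => simp [PartialDFA.accepts, ih, ← add_assoc, add_right_comm _ 1]
    | F => simp [PartialDFA.accepts, ih]
    | D =>
      cases h with
      | zero =>
        simpa [PartialDFA.accepts] using
          fun hpre => absurd (hpre [] List.nil_prefix) (lt_irrefl 0)
      | succ h => simp [PartialDFA.accepts, ih, ← add_assoc]

theorem isMotzkin_iff_heightDFA_accepts (w : List Step) :
    IsMotzkin w ↔ heightDFA.accepts 0 w := by
  rw [heightDFA_accepts_iff, IsMotzkin, eq_comm (a := w.count U)]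
  simp

/-- `IsolatedAfter p w s`: some occurrence of `s` in `w` forms a maximal run of length one,
when `w` is read after the letter `p` (`none`: at the start of the word). -/
def IsolatedAfter {α : Type*} : Option α → List α → α → Prop
  | _, [], _ => False
  | p, x :: t, s => (x = s ∧ p ≠ some s ∧ t.head? ≠ some s) ∨ IsolatedAfter (some x) t s

theorem isolatedAfter_iff {α : Type*} (p : Option α) (w : List α) (s : α) :
    IsolatedAfter p w s ↔
      ∃ x y, w = x ++ s :: y ∧ (p.toList ++ x).getLast? ≠ some s ∧ y.head? ≠ some s := by
  induction w generalizing p with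
  | nil => simp [IsolatedAfter]
  | cons z t ih =>
    rw [IsolatedAfter, ih]
    constructor
    · rintro (⟨rfl, hp, ht⟩ | ⟨x, y, rfl, hx, hy⟩)
      · exact ⟨[], t, rfl, by cases p <;> simp_all, ht⟩
      · exact ⟨z :: x, y, rfl, by rwa [List.getLast?_append_of_ne_nil _ (List.cons_ne_nil _ _)], hy⟩
    · rintro ⟨_ | ⟨z', x⟩, y, hw, hx, hy⟩
      · obtain ⟨rfl, rfl⟩ := List.cons.inj hw
        exact Or.inl ⟨rfl, by cases p <;> simp_all, hy⟩
      · obtain ⟨rfl, rfl⟩ := List.cons.inj hw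
        rw [List.getLast?_append_of_ne_nil _ (List.cons_ne_nil _ _)] at hx
        exact Or.inr ⟨x, y, rfl, hx, hy⟩

theorem hasRun_one_iff (w : List Step) (s : Step) : HasRun w s 1 ↔ IsolatedAfter none w s := by
  simp [HasRun, isolatedAfter_iff]

/-- In the state `(p, safe)`, `p` is the last letter read and `safe` records that it is not the
first letter of its run, so that the run may end here. -/
@[simps]
def runDFA (α : Type*) [DecidableEq α] : PartialDFA α (Option α × Bool) where
  next q b := if q.2 ∨ q.1 = some b then some (some b, q.1 = some b) else none
  accept q := q.2

theorem runDFA_accepts_some_iff {α : Type*} [DecidableEq α] (p : Option α) (a : α)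
    (t : List α) :
    (runDFA α).accepts (some a, decide (p = some a)) t ↔ ∀ s, ¬ IsolatedAfter p (a :: t) s := by
  induction t generalizing p a with
  | nil => simp [PartialDFA.accepts, IsolatedAfter]
  | cons b t ih =>
    simp only [IsolatedAfter.eq_2 p _ a, not_or, forall_and, ← ih]
    by_cases h : p = some a ∨ a = b <;>
      simp [PartialDFA.accepts, h, eq_comm (a := b)] <;> tauto

theorem runDFA_accepts_iff {α : Type*} [DecidableEq α] (w : List α) :
    (runDFA α).accepts (none, true) w ↔ ∀ s, ¬ IsolatedAfter none w s := by
  cases w with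
  | nil => simp [PartialDFA.accepts, IsolatedAfter]
  | cons a t => simpa [PartialDFA.accepts] using runDFA_accepts_some_iff none a t

theorem heightDFA_prod_runDFA_accepts_iff (w : List Step) :
    (heightDFA.prod (runDFA Step)).accepts (0, none, true) w ↔
      IsMotzkin w ∧ ¬ HasRun w U 1 ∧ ¬ HasRun w D 1 ∧ ¬ HasRun w F 1 := by
  simp [PartialDFA.accepts_prod, isMotzkin_iff_heightDFA_accepts, runDFA_accepts_iff,
    hasRun_one_iff, Step.forall_step]

theorem motzkin_avoiding_runs1_values :
    (List.range 12).map (fun n =>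
        Nat.card {w : List Step // w.length = n ∧ IsMotzkin w ∧
          ¬ HasRun w U 1 ∧ ¬ HasRun w D 1 ∧ ¬ HasRun w F 1}) =
      [1, 0, 1, 1, 2, 1, 5, 4, 12, 13, 34, 38] := by
  have hcard (n : ℕ) : Nat.card {w : List Step // w.length = n ∧ IsMotzkin w ∧
      ¬ HasRun w U 1 ∧ ¬ HasRun w D 1 ∧ ¬ HasRun w F 1} =
      (heightDFA.prod (runDFA Step)).countAccepted n (0, none, true) := by
    rw [← PartialDFA.card_accepts]
    exact Nat.card_congr (Equiv.subtypeEquivRight fun w => by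
      rw [heightDFA_prod_runDFA_accepts_iff])
  simp only [hcard]
  decide
end

section
/- Let P be a Motzkin path with no valley at height 0 (i.e., no occurrence of a factor D F^k U, k ≥ 0, whose height after the D step is 0). Then P is either a (possibly empty) run of flat steps, or P = F^{k1} U P1 D F^{k2} for unique nonnegative integers k1, k2 and a unique Motzkin path P1. -/
open Step

/-- `w` has a peak `U F^k D` whose height (just after the `U` step) is `h`. -/
def HasPeak (w : List Step) (h : ℤ) : Prop :=
  ∃ (a b : List Step) (k : ℕ),
    w = a ++ [U] ++ List.replicate k F ++ [D] ++ b ∧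
      (a.count U : ℤ) + 1 - (a.count D : ℤ) = h

/-- `w` has a valley `D F^k U` whose height (just after the `D` step) is `h`. -/
def HasValley (w : List Step) (h : ℤ) : Prop :=
  ∃ (a b : List Step) (k : ℕ),
    w = a ++ [D] ++ List.replicate k F ++ [U] ++ b ∧
      (a.count U : ℤ) - ((a.count D : ℤ) + 1) = h

/-- If every prefix has `#D ≤ #U` and the word has a non-`F` letter, then the first
non-`F` letter is `U`. -/
lemma first_nonF_is_U : ∀ (w : List Step),
    (∀ p : List Step, p <+: w → p.count D ≤ p.count U) →
    (∃ x ∈ w, x ≠ F) → ∃ k rest, w = List.replicate k F ++ U :: rest := by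
  intro w
  induction w with
  | nil => intro _ h; simp at h
  | cons s t ih =>
    intro hpre hx
    cases s with
    | U => exact ⟨0, t, rfl⟩
    | D =>
      have := hpre [D] ⟨t, rfl⟩
      simp at this
    | F =>
      have hx' : ∃ x ∈ t, x ≠ F := by
        rcases hx with ⟨x, hx, hne⟩
        rcases List.mem_cons.mp hx with h | h
        · exact absurd h hne
        · exact ⟨x, h, hne⟩
      have hpre' : ∀ p : List Step, p <+: t → p.count D ≤ p.count U := by
        intro p hp
        have h2 : (F :: p) <+: (F :: t) := by
          obtain ⟨u, hu⟩ := hp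
          exact ⟨u, by rw [List.cons_append, hu]⟩
        have := hpre (F :: p) h2
        simpa using this
      obtain ⟨k, rest, hk⟩ := ih hpre' hx'
      exact ⟨k + 1, rest, by rw [List.replicate_succ, List.cons_append, hk]⟩

/-- If every suffix has `#U ≤ #D` and the word contains `D`, then the last
non-`F` letter is `D`. -/
lemma last_nonF_is_D (w : List Step)
    (hsuf : ∀ s : List Step, s <:+ w → s.count U ≤ s.count D)
    (hD : D ∈ w) : ∃ M k, w = M ++ [D] ++ List.replicate k F := by
  induction w using List.reverseRecOn with
  | nil => simp at hD
  | append_singleton a s ih =>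
    cases s with
    | D => exact ⟨a, 0, by simp⟩
    | U =>
      have := hsuf [U] ⟨a, rfl⟩
      simp at this
    | F =>
      have hD' : D ∈ a := by
        rcases List.mem_append.mp hD with h | h
        · exact h
        · simp at h
      have hsuf' : ∀ s : List Step, s <:+ a → s.count U ≤ s.count D := by
        intro s hs
        have h2 : (s ++ [F]) <:+ (a ++ [F]) := by
          obtain ⟨u, hu⟩ := hs
          exact ⟨u, by rw [← List.append_assoc, hu]⟩
        have := hsuf (s ++ [F]) h2
        simpa using this
      obtain ⟨M, k, hk⟩ := ih hsuf' hD'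
      refine ⟨M, k + 1, ?_⟩
      rw [hk, List.replicate_succ' ]
      simp [List.append_assoc]

lemma repl_cons_inj (c : Step) (hc : c ≠ F) :
    ∀ k k' (X Y : List Step),
      List.replicate k F ++ c :: X = List.replicate k' F ++ c :: Y → k = k' ∧ X = Y := by
  intro k
  induction k with
  | zero =>
    intro k' X Y h
    cases k' with
    | zero => simpa using h
    | succ n =>
      rw [List.replicate_succ] at h
      simp at h
      exact absurd h.1 hc
  | succ n ih =>
    intro k' X Y h
    cases k' with
    | zero =>
      rw [List.replicate_succ] at h
      simp at h
      exact absurd h.1.symm hc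
    | succ m =>
      rw [List.replicate_succ, List.replicate_succ] at h
      simp only [List.cons_append, List.cons.injEq] at h
      obtain ⟨hk, hXY⟩ := ih m X Y h.2
      exact ⟨by omega, hXY⟩

lemma cons_repl_inj (c : Step) (hc : c ≠ F) (k k' : ℕ) (X Y : List Step)
    (h : X ++ c :: List.replicate k F = Y ++ c :: List.replicate k' F) :
    k = k' ∧ X = Y := by
  have h' : List.replicate k F ++ c :: X.reverse = List.replicate k' F ++ c :: Y.reverse := by
    have := congrArg List.reverse h
    simpa [List.reverse_append] using this
  obtain ⟨hk, hXY⟩ := repl_cons_inj c hc k k' X.reverse Y.reverse h'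
  exact ⟨hk, List.reverse_injective hXY⟩

theorem motzkin_no_valley0_decomposition (P : List Step) (hP : IsMotzkin P)
    (hv : ¬ HasValley P 0) :
    (∃ k : ℕ, P = List.replicate k F) ∨
      (∃! t : ℕ × ℕ × {w : List Step // IsMotzkin w},
        P = List.replicate t.1 F ++ [U] ++ t.2.2.1 ++ [D] ++ List.replicate t.2.1 F) := by
  by_cases hF : ∃ k, P = List.replicate k F
  · exact Or.inl hF
  right
  obtain ⟨hpre, hcnt⟩ := hP
  -- P has a non-F letter
  have hx : ∃ x ∈ P, x ≠ F := by
    by_contra h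
    push_neg at h
    exact hF ⟨P.length, List.eq_replicate_of_mem h⟩
  obtain ⟨k1, rest, h1⟩ := first_nonF_is_U P hpre hx
  -- counts in rest
  have hcU : P.count U = rest.count U + 1 := by
    rw [h1]; simp [List.count_append, List.count_replicate]
  have hcD : P.count D = rest.count D := by
    rw [h1]; simp [List.count_append, List.count_replicate]
  have hDmem : D ∈ rest := by
    have : rest.count D = rest.count U + 1 := by omega
    have : 0 < rest.count D := by omega
    exact List.count_pos_iff.mp this
  -- suffix condition on P
  have hsufP : ∀ s : List Step, s <:+ P → s.count U ≤ s.count D := by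
    intro s hs
    obtain ⟨t, ht⟩ := hs
    have htp : t <+: P := ⟨s, ht⟩
    have h1 := hpre t htp
    have h2 : t.count U + s.count U = P.count U := by rw [← ht]; simp [List.count_append]
    have h3 : t.count D + s.count D = P.count D := by rw [← ht]; simp [List.count_append]
    omega
  have hsufrest : ∀ s : List Step, s <:+ rest → s.count U ≤ s.count D := by
    intro s hs
    apply hsufP
    obtain ⟨t, ht⟩ := hs
    exact ⟨List.replicate k1 F ++ [U] ++ t, by rw [h1]; simp [← ht]⟩
  obtain ⟨M, k2, h2⟩ := last_nonF_is_D rest hsufrest hDmem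
  have hPeq : P = List.replicate k1 F ++ [U] ++ M ++ [D] ++ List.replicate k2 F := by
    rw [h1, h2]; simp
  -- M has balanced counts
  have hMcnt : M.count U = M.count D := by
    have hu : P.count U = M.count U + 1 := by
      rw [hPeq]; simp [List.count_append, List.count_replicate]
    have hd : P.count D = M.count D + 1 := by
      rw [hPeq]; simp [List.count_append, List.count_replicate]
    omega
  -- M satisfies the prefix condition
  have hMpre : ∀ p : List Step, p <+: M → p.count D ≤ p.count U := by
    by_contra hk
    push_neg at hk
    obtain ⟨p, hp, hlt⟩ := hk
    have hn : ∃ n, (M.take n).count U < (M.take n).count D := by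
      refine ⟨p.length, ?_⟩
      rw [← List.prefix_iff_eq_take.mp hp]
      exact hlt
    classical
    set n0 := Nat.find hn with hn0def
    have h0 : (M.take n0).count U < (M.take n0).count D := Nat.find_spec hn
    have hmin : ∀ m < n0, ¬ (M.take m).count U < (M.take m).count D :=
      fun m hm => Nat.find_min hn hm
    have hn0pos : n0 ≠ 0 := by
      intro h
      rw [h] at h0; simp at h0
    have hle : n0 ≤ M.length := by
      by_contra h
      push_neg at h
      have h1' := hmin M.length h
      rw [List.take_length] at h1'
      rw [List.take_of_length_le (le_of_lt h)] at h0
      exact h1' h0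
    clear hn0def
    clear_value n0
    obtain ⟨m, rfl⟩ : ∃ m, n0 = m + 1 := ⟨n0 - 1, by omega⟩
    have hmlt : m < M.length := by omega
    have htake : M.take (m + 1) = M.take m ++ [M[m]] :=
      (List.take_concat_get' M m hmlt).symm
    have hmok : ¬ (M.take m).count U < (M.take m).count D := hmin m (by omega)
    -- the (m+1)-st letter must be D, and counts balance before it
    have hgetD : M[m] = D ∧ (M.take m).count U = (M.take m).count D := by
      rw [htake] at h0
      cases hg : M[m] with
      | U => exfalso; rw [hg] at h0; simp [List.count_append] at h0; omega
      | F => exfalso; rw [hg] at h0; simp [List.count_append] at h0; omega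
      | D => refine ⟨rfl, ?_⟩; rw [hg] at h0; simp [List.count_append] at h0; omega
    obtain ⟨hgD, hbal⟩ := hgetD
    have hM1 : M = M.take m ++ [D] ++ M.drop (m + 1) := by
      conv_lhs => rw [← List.take_append_drop (m + 1) M]
      rw [htake, hgD]
    -- counts of take (m+1)
    have hcnt1 : (M.take (m+1)).count U = (M.take m).count U := by
      rw [htake, hgD]; simp [List.count_append]
    have hcnt2 : (M.take (m+1)).count D = (M.take m).count D + 1 := by
      rw [htake, hgD]; simp [List.count_append]
    -- the word after this D
    set w' : List Step := M.drop (m + 1) ++ [D] ++ List.replicate k2 F with hw'def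
    have hP2 : P = (List.replicate k1 F ++ [U] ++ M.take (m+1)) ++ w' := by
      rw [hPeq, hw'def, htake, hgD]
      conv_lhs => rw [hM1]
      simp [List.append_assoc]
    have hw'pre : ∀ p' : List Step, p' <+: w' → p'.count D ≤ p'.count U := by
      intro p' hp'
      obtain ⟨t, ht⟩ := hp'
      have hpp : (List.replicate k1 F ++ [U] ++ M.take (m+1) ++ p') <+: P := by
        refine ⟨t, ?_⟩
        rw [hP2, ← ht]
        simp [List.append_assoc]
      have := hpre _ hpp
      simp only [List.count_append, List.count_replicate, List.count_singleton] at this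
      simp at this
      omega
    have hw'x : ∃ x ∈ w', x ≠ F := ⟨D, by simp [hw'def], by simp⟩
    obtain ⟨j, rest', hw'⟩ := first_nonF_is_U w' hw'pre hw'x
    -- build the valley
    apply hv
    refine ⟨List.replicate k1 F ++ [U] ++ M.take m, rest', j, ?_, ?_⟩
    · rw [hP2, hw', htake, hgD]
      simp [List.append_assoc]
    · simp only [List.count_append, List.count_replicate, List.count_singleton]
      simp
      omega
  have hM : IsMotzkin M := ⟨hMpre, hMcnt⟩
  refine ⟨(k1, k2, ⟨M, hM⟩), hPeq, ?_⟩
  rintro ⟨a1, a2, ⟨w, hw⟩⟩ ht'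
  simp only at ht'
  have heq : List.replicate a1 F ++ U :: (w ++ [D] ++ List.replicate a2 F)
      = List.replicate k1 F ++ U :: (M ++ [D] ++ List.replicate k2 F) := by
    calc List.replicate a1 F ++ U :: (w ++ [D] ++ List.replicate a2 F)
        = P := by rw [ht']; simp [List.append_assoc]
      _ = List.replicate k1 F ++ U :: (M ++ [D] ++ List.replicate k2 F) := by
          rw [hPeq]; simp [List.append_assoc]
  obtain ⟨hk1, hmid⟩ := repl_cons_inj U (by simp) a1 k1 _ _ heq
  have hmid' : w ++ D :: List.replicate a2 F = M ++ D :: List.replicate k2 F := by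
    simpa [List.append_assoc] using hmid
  obtain ⟨hk2, hww⟩ := cons_repl_inj D (by simp) a2 k2 w M hmid'
  subst hk1 hk2 hww
  rfl
end

section
/- The generating function P(x) = Σ_{n≥0} a(n) x^n, where a(n) is the number of Motzkin paths of length n all of whose peak heights and valley heights are even, satisfies (x-1)^2 + (x-1)^3 P + x^4 P^2 = 0 as formal power series over ℤ. -/
open Step

/-!
At an odd height an even-turn Motzkin path can neither peak nor valley, so after reaching an odd
height with a `U` (resp. `D`) its next non-flat step is again `U` (resp. `D`). Hence a nonempty
such path is uniquely either `F w` or `U F^j U c D F^k D w` with `c`, `w` even-turn paths (`c`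
lifted by two), which gives `P = 1 + x P + x^4 P^2 / (1 - x)^2`; multiplying by `(1 - x)^2` is the
claimed equation. Both directions of the decomposition are read off from a finite-state
description of the paths: the state is the height together with the step that is banned next.
-/

open List

lemma forall_prefix_cons {α : Type*} {P : List α → Prop} {x : α} {w : List α} :
    (∀ p, p <+: x :: w → P p) ↔ P [] ∧ ∀ p, p <+: w → P (x :: p) := by
  simp only [prefix_cons_iff]
  constructor
  · exact fun h => ⟨h [] (.inl rfl), fun p hp => h _ (.inr ⟨p, rfl, hp⟩)⟩
  · rintro ⟨hnil, hcons⟩ p (rfl | ⟨t, rfl, ht⟩)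
    exacts [hnil, hcons t ht]

open PowerSeries

section WeightGF

variable {α β : Type*}

noncomputable def weightGF (wt : α → ℕ) : ℤ⟦X⟧ :=
  mk fun n => (Nat.card {a // wt a = n} : ℤ)

def FiniteFibres (wt : α → ℕ) : Prop := ∀ n, Finite {a // wt a = n}

lemma coeff_weightGF (wt : α → ℕ) (n : ℕ) :
    coeff n (weightGF wt) = Nat.card {a // wt a = n} :=
  coeff_mk _ _

lemma weightGF_congr {wa : α → ℕ} {wb : β → ℕ} (e : α ≃ β) (he : ∀ a, wb (e a) = wa a) :
    weightGF wb = weightGF wa := by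
  ext n
  rw [coeff_weightGF, coeff_weightGF, ← Nat.card_congr (e.subtypeEquiv fun a => by rw [he])]

lemma weightGF_sumElim {wa : α → ℕ} {wb : β → ℕ} (ha : FiniteFibres wa)
    (hb : FiniteFibres wb) :
    weightGF (Sum.elim wa wb) = weightGF wa + weightGF wb := by
  ext n
  have : Finite {a // Sum.elim wa wb (.inl a) = n} := ha n
  have : Finite {b // Sum.elim wa wb (.inr b) = n} := hb n
  rw [map_add, coeff_weightGF, coeff_weightGF, coeff_weightGF, Nat.card_congr Equiv.subtypeSum,
    Nat.card_sum, Nat.cast_add]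
  rfl

lemma FiniteFibres.sumElim {wa : α → ℕ} {wb : β → ℕ} (ha : FiniteFibres wa)
    (hb : FiniteFibres wb) : FiniteFibres (Sum.elim wa wb) := fun n =>
  have : Finite {a // Sum.elim wa wb (.inl a) = n} := ha n
  have : Finite {b // Sum.elim wa wb (.inr b) = n} := hb n
  Finite.of_equiv _ Equiv.subtypeSum.symm

def prodWeight (wa : α → ℕ) (wb : β → ℕ) (p : α × β) : ℕ := wa p.1 + wb p.2

def prodFibreEquiv (wa : α → ℕ) (wb : β → ℕ) (n : ℕ) :
    {p : α × β // prodWeight wa wb p = n} ≃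
      Σ ij : Finset.HasAntidiagonal.antidiagonal n,
        {a // wa a = ij.1.1} × {b // wb b = ij.1.2} where
  toFun p :=
    ⟨⟨(wa p.1.1, wb p.1.2), Finset.HasAntidiagonal.mem_antidiagonal.2 p.2⟩, ⟨p.1.1, rfl⟩,
      ⟨p.1.2, rfl⟩⟩
  invFun q := ⟨(q.2.1.1, q.2.2.1), by
    show wa _ + wb _ = n
    rw [q.2.1.2, q.2.2.2]; exact Finset.HasAntidiagonal.mem_antidiagonal.1 q.1.2⟩
  left_inv p := rfl
  right_inv := by
    rintro ⟨⟨⟨i, j⟩, hij⟩, ⟨a, ha⟩, ⟨b, hb⟩⟩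
    dsimp only at ha hb
    subst ha hb
    rfl

lemma FiniteFibres.prod {wa : α → ℕ} {wb : β → ℕ} (ha : FiniteFibres wa)
    (hb : FiniteFibres wb) : FiniteFibres (prodWeight wa wb) := fun n =>
  have := fun i => ha i
  have := fun i => hb i
  Finite.of_equiv _ (prodFibreEquiv wa wb n).symm

lemma weightGF_prod {wa : α → ℕ} {wb : β → ℕ} (ha : FiniteFibres wa) (hb : FiniteFibres wb) :
    weightGF (prodWeight wa wb) = weightGF wa * weightGF wb := by
  ext n
  have := fun i => ha i
  have := fun i => hb i
  rw [coeff_mul, coeff_weightGF, Nat.card_congr (prodFibreEquiv wa wb n), Nat.card_sigma]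
  simp only [Nat.card_prod, Nat.cast_sum, Nat.cast_mul, coeff_weightGF]
  exact Finset.sum_coe_sort _ fun ij : ℕ × ℕ =>
    (Nat.card {a // wa a = ij.1} * Nat.card {b // wb b = ij.2} : ℤ)

lemma FiniteFibres.const_add {wa : α → ℕ} (ha : FiniteFibres wa) (k : ℕ) :
    FiniteFibres fun a => k + wa a := fun n =>
  have := ha (n - k)
  Finite.of_injective (fun a : {a // k + wa a = n} => (⟨a.1, by omega⟩ : {a // wa a = n - k}))
    fun a b h => Subtype.ext (congrArg Subtype.val h :)

lemma weightGF_const_add (wa : α → ℕ) (k : ℕ) :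
    weightGF (fun a => k + wa a) = X ^ k * weightGF wa := by
  ext n
  rw [coeff_X_pow_mul', coeff_weightGF]
  split_ifs with hk
  · rw [coeff_weightGF, Nat.card_congr (Equiv.subtypeEquivRight fun a => (by omega :
      k + wa a = n ↔ wa a = n - k))]
  · simp only [Nat.cast_eq_zero, Nat.card_eq_zero]
    left
    exact ⟨fun a => by omega⟩

lemma weightGF_unit : weightGF (fun _ : Unit => 0) = 1 := by
  ext n
  rw [coeff_weightGF, coeff_one]
  split_ifs with hn
  · subst hn; simp
  · simp only [Nat.cast_eq_zero, Nat.card_eq_zero]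
    left
    exact ⟨fun a => hn a.2.symm⟩

lemma weightGF_id : weightGF (id : ℕ → ℕ) = mk 1 := by
  ext n
  rw [coeff_weightGF, coeff_mk]
  exact congrArg Nat.cast (Nat.card_unique (α := {m // m = n}))

lemma finiteFibres_id : FiniteFibres (id : ℕ → ℕ) := fun n => by
  change Finite {m // m = n}; infer_instance

end WeightGF

namespace Step

def rise : Step → ℤ
  | U => 1
  | D => -1
  | F => 0

def opp : Step → Step
  | U => D
  | D => U
  | F => F

instance : Fintype Step := ⟨{U, D, F}, fun x => by cases x <;> simp⟩

end Step

def height (w : List Step) : ℤ := w.count U - w.count D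

@[simp] lemma height_nil : height [] = 0 := by simp [height]

@[simp] lemma height_cons (x : Step) (w : List Step) :
    height (x :: w) = x.rise + height w := by
  cases x <;> simp [height, Step.rise] <;> ring

def LeadsWith (x : Step) (w : List Step) : Prop := w.find? (· ≠ F) = some x

lemma leadsWith_F_cons {x : Step} {w : List Step} : LeadsWith x (F :: w) ↔ LeadsWith x w := by
  simp [LeadsWith]

lemma leadsWith_cons_of_ne_F {x y : Step} {w : List Step} (hy : y ≠ F) :
    LeadsWith x (y :: w) ↔ y = x := by
  simp [LeadsWith, hy]

lemma leadsWith_iff {x : Step} {w : List Step} (hx : x ≠ F) :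
    LeadsWith x w ↔ ∃ k b, w = replicate k F ++ x :: b := by
  simp only [LeadsWith, find?_eq_some_iff_append, ne_eq, decide_not, Bool.not_eq_true',
    decide_eq_false_iff_not, hx, not_false_eq_true, Bool.not_not, decide_eq_true_eq, true_and]
  constructor
  · rintro ⟨a, b, rfl, ha⟩
    exact ⟨a.length, b, by rw [← eq_replicate_iff.2 ⟨rfl, ha⟩]⟩
  · rintro ⟨k, b, rfl⟩
    exact ⟨_, b, rfl, fun a ha => eq_of_mem_replicate ha⟩

/-- Peaks (`x = U`) and valleys (`x = D`) at once: a factor `x F^k x.opp`, with the height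
taken just after the `x`. -/
def HasTurn (x : Step) (w : List Step) (g : ℤ) : Prop :=
  ∃ a b, w = a ++ x :: b ∧ LeadsWith x.opp b ∧ height a + x.rise = g

lemma hasTurn_iff {x : Step} (hx : x ≠ F) {w : List Step} {g : ℤ} :
    HasTurn x w g ↔
      ∃ a b k, w = a ++ [x] ++ replicate k F ++ [x.opp] ++ b ∧ height a + x.rise = g := by
  have hx' : x.opp ≠ F := by cases x <;> simp_all [Step.opp]
  constructor
  · rintro ⟨a, b', rfl, hb, rfl⟩
    obtain ⟨k, b, rfl⟩ := (leadsWith_iff hx').1 hb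
    exact ⟨a, b, k, by simp, rfl⟩
  · rintro ⟨a, b, k, rfl, rfl⟩
    exact ⟨a, replicate k F ++ x.opp :: b, by simp, (leadsWith_iff hx').2 ⟨k, b, rfl⟩, rfl⟩

lemma hasPeak_iff_hasTurn {w : List Step} {g : ℤ} : HasPeak w g ↔ HasTurn U w g := by
  rw [hasTurn_iff (by decide)]
  exact exists₃_congr fun a b k => and_congr_right fun _ => by simp [height, Step.rise]; omega

lemma hasValley_iff_hasTurn {w : List Step} {g : ℤ} : HasValley w g ↔ HasTurn D w g := by
  rw [hasTurn_iff (by decide)]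
  exact exists₃_congr fun a b k => and_congr_right fun _ => by simp [height, Step.rise]; omega

lemma hasTurn_cons {x y : Step} {w : List Step} {g : ℤ} :
    HasTurn x (y :: w) g ↔
      (y = x ∧ LeadsWith x.opp w ∧ g = x.rise) ∨ ∃ g', HasTurn x w g' ∧ g = y.rise + g' := by
  constructor
  · rintro ⟨_ | ⟨z, a⟩, b, he, hb, rfl⟩
    · obtain ⟨rfl, rfl⟩ := cons_eq_cons.1 he
      exact .inl ⟨rfl, hb, by simp⟩
    · obtain ⟨rfl, rfl⟩ := cons_eq_cons.1 he
      exact .inr ⟨_, ⟨a, b, rfl, hb, rfl⟩, by simp; ring⟩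
  · rintro (⟨rfl, hw, rfl⟩ | ⟨g', ⟨a, b, rfl, hb, rfl⟩, rfl⟩)
    · exact ⟨[], w, rfl, hw, by simp⟩
    · exact ⟨y :: a, b, rfl, hb, by simp; ring⟩

/-- The step that may not come next after a step `x` lands at height `h`: at an odd height
the path must keep its direction, or it would create an odd peak or valley. -/
def banned (h : ℤ) (x : Step) : Option Step := if Odd h then some x.opp else none

lemma banned_add_two (h : ℤ) (x : Step) : banned (h + 2) x = banned h x := by
  simp only [banned, Int.odd_add, even_two, iff_true]

/-- A state is a height together with the step currently banned. -/
def advance (s : ℤ × Option Step) (x : Step) : Option (ℤ × Option Step) :=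
  if x = F then some s
  else if s.2 = some x ∨ s.1 + x.rise < 0 then none
  else some (s.1 + x.rise, banned (s.1 + x.rise) x)

lemma advance_F (s : ℤ × Option Step) : advance s F = some s := rfl

lemma advance_eq_some {s s' : ℤ × Option Step} {x : Step} (hx : x ≠ F) :
    advance s x = some s' ↔
      s.2 ≠ some x ∧ 0 ≤ s.1 + x.rise ∧ s' = (s.1 + x.rise, banned (s.1 + x.rise) x) := by
  unfold advance
  split_ifs with h1 h2 <;> grind

lemma advance_of_ne_F {h : ℤ} {f : Option Step} {x : Step} (hx : x ≠ F) (hf : f ≠ some x)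
    (hh : 0 ≤ h + x.rise) : advance (h, f) x = some (h + x.rise, banned (h + x.rise) x) :=
  (advance_eq_some hx).2 ⟨hf, hh, rfl⟩

def run (s : ℤ × Option Step) (w : List Step) : Option (ℤ × Option Step) := w.foldlM advance s

@[simp] lemma run_nil (s : ℤ × Option Step) : run s [] = some s := rfl

lemma run_cons (s : ℤ × Option Step) (x : Step) (w : List Step) :
    run s (x :: w) = (advance s x).bind (run · w) := rfl

lemma run_append (s : ℤ × Option Step) (a b : List Step) :
    run s (a ++ b) = (run s a).bind (run · b) :=
  foldlM_append

@[simp] lemma run_F_cons (s : ℤ × Option Step) (w : List Step) : run s (F :: w) = run s w := rfl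

@[simp] lemma run_replicate_F (s : ℤ × Option Step) (k : ℕ) :
    run s (replicate k F) = some s := by
  induction k with
  | zero => rfl
  | succ k ih => rwa [replicate_succ, run_F_cons]

lemma advance_add_two {h h' : ℤ} {f f' : Option Step} {x : Step}
    (hx : advance (h, f) x = some (h', f')) : advance (h + 2, f) x = some (h' + 2, f') := by
  by_cases hF : x = F
  · subst hF; simpa [advance_F] using hx
  · obtain ⟨hf, hh, he⟩ := (advance_eq_some hF).1 hx
    simp only [Prod.mk.injEq] at he
    obtain ⟨rfl, rfl⟩ := he
    rw [advance_of_ne_F hF hf (by omega), add_right_comm, banned_add_two]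

lemma run_add_two {w : List Step} : ∀ {h h' : ℤ} {f f' : Option Step},
    run (h, f) w = some (h', f') → run (h + 2, f) w = some (h' + 2, f') := by
  induction w with
  | nil => simp
  | cons x w ih =>
    intro h h' f f' hw
    obtain ⟨⟨h₁, f₁⟩, hx, hw⟩ := Option.bind_eq_some_iff.1 hw
    rw [run_cons, advance_add_two hx]
    exact ih hw

def IsAdmissible (s : ℤ × Option Step) : Prop := 0 ≤ s.1 ∧ ∀ x ∈ s.2, Odd s.1

lemma IsAdmissible.of_advance {s s' : ℤ × Option Step} {x : Step} (hs : IsAdmissible s)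
    (hx : advance s x = some s') : IsAdmissible s' := by
  by_cases hF : x = F
  · subst hF; cases hx; exact hs
  · obtain ⟨-, hh, rfl⟩ := (advance_eq_some hF).1 hx
    refine ⟨hh, fun y hy => ?_⟩
    simp only [banned] at hy
    split_ifs at hy with hodd
    exacts [hodd, absurd hy (by simp)]

lemma IsAdmissible.of_run {w : List Step} : ∀ {s s' : ℤ × Option Step}, IsAdmissible s →
    run s w = some s' → IsAdmissible s' := by
  induction w with
  | nil => intro s s' hs hw; cases hw; exact hs
  | cons x w ih =>
    intro s s' hs hw
    obtain ⟨s₁, hx, hw⟩ := Option.bind_eq_some_iff.1 hw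
    exact ih (hs.of_advance hx) hw

/-- `w` is a valid continuation of an even-turn path that has reached state `s`. -/
def IsEvenMotzkinFrom (s : ℤ × Option Step) (w : List Step) : Prop :=
  (∀ p, p <+: w → 0 ≤ s.1 + height p) ∧ s.1 + height w = 0 ∧
    (∀ x, x ≠ F → ∀ g, HasTurn x w g → Even (s.1 + g)) ∧ ∀ x ∈ s.2, ¬LeadsWith x w

lemma isEvenMotzkinFrom_nil {s : ℤ × Option Step} (hs : IsAdmissible s) :
    IsEvenMotzkinFrom s [] ↔ s = (0, none) := by
  obtain ⟨h, f⟩ := s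
  constructor
  · rintro ⟨-, hh, -⟩
    simp only [height_nil, add_zero] at hh
    subst hh
    cases f with
    | none => rfl
    | some x => exact absurd (hs.2 x rfl) (by norm_num)
  · rintro ⟨⟩
    refine ⟨fun p hp => by simp [prefix_nil.1 hp], by simp, fun x _ g ⟨a, b, he, _⟩ => ?_,
      by simp⟩
    simp at he

lemma forall_hasTurn_cons {h : ℤ} {x : Step} {w : List Step} :
    (∀ z, z ≠ F → ∀ g, HasTurn z (x :: w) g → Even (h + g)) ↔
      (x ≠ F → LeadsWith x.opp w → Even (h + x.rise)) ∧
        ∀ z, z ≠ F → ∀ g, HasTurn z w g → Even (h + x.rise + g) := by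
  simp only [hasTurn_cons]
  constructor
  · intro H
    refine ⟨fun hx hw => H x hx _ (.inl ⟨rfl, hw, rfl⟩), fun z hz g hg => ?_⟩
    rw [add_assoc]
    exact H z hz _ (.inr ⟨g, hg, rfl⟩)
  · rintro ⟨H₁, H₂⟩ z hz g (⟨rfl, hw, rfl⟩ | ⟨g', hg', rfl⟩)
    · exact H₁ hz hw
    · rw [← add_assoc]
      exact H₂ z hz g' hg'

lemma isEvenMotzkinFrom_cons {s : ℤ × Option Step} {x : Step} {w : List Step}
    (hs : 0 ≤ s.1) :
    IsEvenMotzkinFrom s (x :: w) ↔ ∃ s', advance s x = some s' ∧ IsEvenMotzkinFrom s' w := by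
  obtain ⟨h, f⟩ := s
  by_cases hF : x = F
  · subst hF
    simp only [IsEvenMotzkinFrom, advance_F, Option.some.injEq, exists_eq_left',
      forall_prefix_cons, height_cons, Step.rise, zero_add, forall_hasTurn_cons, ne_eq,
      not_true_eq_false, IsEmpty.forall_iff, add_zero, true_and, leadsWith_F_cons, height_nil]
    exact and_congr_left' (and_iff_right_of_imp fun H => by simpa using H [] nil_prefix)
  · simp only [advance_eq_some hF, IsEvenMotzkinFrom, forall_prefix_cons, height_cons,
      height_nil, add_zero, forall_hasTurn_cons, leadsWith_cons_of_ne_F hF]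
    constructor
    · rintro ⟨⟨-, hp⟩, he, ⟨hturn, ht⟩, hf⟩
      refine ⟨_, ⟨fun hfx => hf x hfx rfl, by simpa using hp [] nil_prefix, rfl⟩,
        fun p hp' => by simpa [add_assoc] using hp p hp', by simpa [add_assoc] using he, ht, ?_⟩
      simp only [banned]
      split_ifs with hodd
      · rintro _ ⟨⟩ hl
        exact Int.not_even_iff_odd.2 hodd (hturn hF hl)
      · nofun
    · rintro ⟨_, ⟨hf, -, rfl⟩, hp, he, ht, hb⟩
      refine ⟨⟨hs, fun p hp' => by simpa [add_assoc] using hp p hp'⟩,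
        by simpa [add_assoc] using he, ⟨fun _ hl => ?_, ht⟩, ?_⟩
      · by_contra hodd
        exact hb x.opp (by simp [banned, Int.not_even_iff_odd.1 hodd]) hl
      · rintro y hy rfl
        exact hf hy

theorem run_eq_iff_isEvenMotzkinFrom {w : List Step} :
    ∀ {s : ℤ × Option Step}, IsAdmissible s →
      (run s w = some (0, none) ↔ IsEvenMotzkinFrom s w) := by
  induction w with
  | nil => intro s hs; rw [isEvenMotzkinFrom_nil hs, run_nil, Option.some.injEq]
  | cons x w ih =>
    intro s hs
    rw [isEvenMotzkinFrom_cons hs.1, run_cons, Option.bind_eq_some_iff]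
    exact exists_congr fun s' => and_congr_right fun hx => ih (hs.of_advance hx)

def IsEvenMotzkin (w : List Step) : Prop :=
  IsMotzkin w ∧ (∀ h : ℤ, HasPeak w h → Even h) ∧ ∀ h : ℤ, HasValley w h → Even h

lemma isEvenMotzkin_iff_isEvenMotzkinFrom {w : List Step} :
    IsEvenMotzkin w ↔ IsEvenMotzkinFrom (0, none) w := by
  have hturn : ∀ x, x ≠ F → x = U ∨ x = D := by decide
  simp only [IsEvenMotzkin, IsMotzkin, IsEvenMotzkinFrom, hasPeak_iff_hasTurn,
    hasValley_iff_hasTurn, height, zero_add, sub_nonneg, Nat.cast_le, sub_eq_zero, Nat.cast_inj]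
  constructor
  · rintro ⟨⟨hp, he⟩, hpeak, hvalley⟩
    refine ⟨hp, he, fun x hx g hg => ?_, by simp⟩
    rcases hturn x hx with rfl | rfl
    exacts [hpeak g hg, hvalley g hg]
  · rintro ⟨hp, he, ht, -⟩
    exact ⟨⟨hp, he⟩, ht U (by decide), ht D (by decide)⟩

theorem isEvenMotzkin_iff_run {w : List Step} :
    IsEvenMotzkin w ↔ run (0, none) w = some (0, none) := by
  rw [isEvenMotzkin_iff_isEvenMotzkinFrom, run_eq_iff_isEvenMotzkinFrom ⟨le_rfl, by simp⟩]

lemma run_U_cons_append_D_cons {h : ℤ} (h0 : 0 ≤ h) {f f' : Option Step} (hf : f ≠ some U)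
    (hf' : f' ≠ some D) {c : List Step} (hc : run (h + 1, banned (h + 1) U) c = some (h + 1, f'))
    (r : List Step) : run (h, f) (U :: (c ++ D :: r)) = run (h, banned h D) r := by
  rw [run_cons, advance_of_ne_F (by decide) hf (by simp [Step.rise]; omega)]
  simp only [Step.rise, Option.bind_some, run_append, hc, run_cons]
  rw [advance_of_ne_F (by decide) hf' (by simp [Step.rise]; omega)]
  simp [Step.rise]

/-- First passage below `h + 2`: the stretch `c` before the first step down from `h + 2` never
goes below `h + 2`, so it can equally be run from `h` (the banned steps depend only on parity). -/
lemma exists_first_descent {v : List Step} :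
    ∀ {h : ℤ} {f : Option Step} {s : ℤ × Option Step},
      0 ≤ h → run (h + 2, f) v = some s → s.1 ≤ h + 1 →
        ∃ c r f', v = c ++ D :: r ∧ f' ≠ some D ∧ run (h, f) c = some (h, f') := by
  induction hn : v.length using Nat.strong_induction_on generalizing v with
  | _ n ih =>
    subst hn
    intro h f s h0 hv hs
    match v with
    | [] =>
      simp only [run_nil, Option.some.injEq] at hv
      subst hv
      simp at hs
    | F :: t =>
      obtain ⟨c, r, f', rfl, hf', hc⟩ := ih t.length (by simp) rfl h0 hv hs
      exact ⟨F :: c, r, f', rfl, hf', hc⟩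
    | D :: t =>
      obtain ⟨_, hadv, -⟩ := Option.bind_eq_some_iff.1 hv
      exact ⟨[], t, f, rfl, ((advance_eq_some (by decide)).1 hadv).1, rfl⟩
    | U :: t =>
      obtain ⟨_, hadv, ht⟩ := Option.bind_eq_some_iff.1 hv
      obtain ⟨hf, -, rfl⟩ := (advance_eq_some (by decide)).1 hadv
      rw [show h + 2 + U.rise = h + 1 + 2 by simp [Step.rise]; ring, banned_add_two] at ht
      obtain ⟨c₁, r₁, f₁, rfl, hf₁, hc₁⟩ := ih t.length (by simp) rfl (by omega) ht (by omega)
      have hc₁' := run_add_two hc₁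
      rw [← banned_add_two, show h + 1 + 2 = h + 2 + 1 by ring] at hc₁'
      rw [run_U_cons_append_D_cons (by omega) hf hf₁ hc₁', banned_add_two] at hv
      obtain ⟨c₂, r₂, f₂, rfl, hf₂, hc₂⟩ := ih r₁.length (by simp; omega) rfl h0 hv hs
      exact ⟨U :: (c₁ ++ D :: c₂), r₂, f₂, by simp, hf₂,
        by rw [run_U_cons_append_D_cons h0 hf hf₁ hc₁, hc₂]⟩

lemma exists_forced_step {x : Step} (hx : x ≠ F) {v : List Step} :
    ∀ {h : ℤ} {s : ℤ × Option Step}, run (h, some x.opp) v = some s → s ≠ (h, some x.opp) →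
      ∃ k v', v = replicate k F ++ x :: v' ∧
        run (h + x.rise, banned (h + x.rise) x) v' = some s := by
  induction v with
  | nil => intro h s hv hs; cases hv; exact absurd rfl hs
  | cons y t ih =>
    intro h s hv hs
    by_cases hy : y = F
    · subst hy
      obtain ⟨k, v', rfl, hv'⟩ := ih hv hs
      exact ⟨k + 1, v', rfl, hv'⟩
    · obtain ⟨_, hadv, ht⟩ := Option.bind_eq_some_iff.1 hv
      obtain ⟨hban, -, rfl⟩ := (advance_eq_some hy).1 hadv
      obtain rfl : y = x := by cases x <;> cases y <;> simp_all [Step.opp]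
      exact ⟨0, t, rfl, ht⟩

def arch (j : ℕ) (c : List Step) (k : ℕ) (w : List Step) : List Step :=
  U :: (replicate j F ++ U :: (c ++ D :: (replicate k F ++ D :: w)))

lemma isEvenMotzkin_nil : IsEvenMotzkin [] := isEvenMotzkin_iff_run.2 rfl

lemma isEvenMotzkin_F_cons {w : List Step} : IsEvenMotzkin (F :: w) ↔ IsEvenMotzkin w := by
  simp only [isEvenMotzkin_iff_run, run_F_cons]

lemma not_isEvenMotzkin_D_cons (w : List Step) : ¬IsEvenMotzkin (D :: w) := by
  simp [isEvenMotzkin_iff_run, run_cons, advance, Step.rise]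

lemma isEvenMotzkin_arch {c w : List Step} (hc : IsEvenMotzkin c) (hw : IsEvenMotzkin w)
    (j k : ℕ) :
    IsEvenMotzkin (arch j c k w) := by
  rw [isEvenMotzkin_iff_run] at hc hw ⊢
  have hc₂ : run (0 + 2, none) c = some (0 + 2, none) := run_add_two hc
  simp only [zero_add] at hc₂
  simp [arch, run_cons, run_append, run_replicate_F, advance, banned, Step.rise, Step.opp, hc₂,
    hw]

lemma exists_arch_eq_U_cons {v : List Step} (hv : IsEvenMotzkin (U :: v)) :
    ∃ j c k w, U :: v = arch j c k w ∧ IsEvenMotzkin c ∧ IsEvenMotzkin w := by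
  rw [isEvenMotzkin_iff_run] at hv
  obtain ⟨j, v₁, rfl, hv₁⟩ := exists_forced_step (x := U) (h := 1) (by decide)
    (by simpa [run_cons, advance, banned, Step.rise] using hv) (by simp)
  rw [show (1 : ℤ) + U.rise = 0 + 2 from rfl,
    show banned (0 + 2) U = none by simp [banned]] at hv₁
  obtain ⟨c, r, f, rfl, hf, hc⟩ := exists_first_descent le_rfl hv₁ (by simp)
  obtain rfl : f = none := by
    cases f
    · rfl
    · exact absurd ((IsAdmissible.of_run ⟨le_rfl, by simp⟩ hc).2 _ rfl) (by norm_num)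
  rw [run_append, run_add_two hc] at hv₁
  obtain ⟨k, w, rfl, hw⟩ := exists_forced_step (x := D) (h := 1) (by decide)
    (by simpa [run_cons, advance, banned, Step.rise] using hv₁) (by simp)
  exact ⟨j, c, k, w, rfl, isEvenMotzkin_iff_run.2 hc,
    isEvenMotzkin_iff_run.2 (by simpa [banned, Step.rise] using hw)⟩

lemma replicate_F_append_cons_inj {x : Step} (hx : x ≠ F) {j j' : ℕ} {a a' : List Step}
    (h : replicate j F ++ x :: a = replicate j' F ++ x :: a') : j = j' ∧ a = a' := by
  induction j generalizing j' with
  | zero => cases j' <;> simp_all [replicate_succ]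
  | succ j ih =>
    cases j' with
    | zero => simp_all [replicate_succ]
    | succ j' => simpa using ih (by simpa [replicate_succ] using h)

lemma IsMotzkin.not_append_D_prefix {c c' : List Step} (hc : IsMotzkin c)
    (hc' : IsMotzkin c') :
    ¬c ++ [D] <+: c' := fun hp => by
  have := hc'.1 _ hp
  simp [count_append, hc.2] at this

lemma IsMotzkin.eq_of_append_D_cons {c c' a a' : List Step} (hc : IsMotzkin c)
    (hc' : IsMotzkin c') (h : c ++ D :: a = c' ++ D :: a') : c = c' := by
  rcases append_eq_append_iff.1 h with ⟨_ | ⟨y, b⟩, rfl, hb⟩ | ⟨_ | ⟨y, b⟩, rfl, hb⟩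
  · simp
  · obtain ⟨rfl, -⟩ := cons_eq_cons.1 hb
    exact absurd ⟨b, by simp⟩ (hc.not_append_D_prefix hc')
  · simp
  · obtain ⟨rfl, -⟩ := cons_eq_cons.1 hb
    exact absurd ⟨b, by simp⟩ (hc'.not_append_D_prefix hc)

lemma arch_inj {j j' k k' : ℕ} {c c' w w' : List Step} (hc : IsMotzkin c)
    (hc' : IsMotzkin c') (h : arch j c k w = arch j' c' k' w') :
    j = j' ∧ c = c' ∧ k = k' ∧ w = w' := by
  obtain ⟨rfl, hcw⟩ := replicate_F_append_cons_inj (by decide) ((cons_inj_right U).1 h)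
  obtain rfl := hc.eq_of_append_D_cons hc' hcw
  obtain ⟨rfl, rfl⟩ :=
    replicate_F_append_cons_inj (by decide) ((cons_inj_right D).1 (append_cancel_left hcw))
  exact ⟨rfl, rfl, rfl, rfl⟩

abbrev EvenMotzkinPath : Type := {w : List Step // IsEvenMotzkin w}

def EvenMotzkinPath.length (w : EvenMotzkinPath) : ℕ := w.1.length

lemma finiteFibres_evenMotzkinPath_length : FiniteFibres EvenMotzkinPath.length := fun n =>
  have := (List.finite_length_eq Step n).to_subtype
  Finite.of_injective (fun w : {w : EvenMotzkinPath // w.length = n} =>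
      (⟨w.1.1, w.2⟩ : {l : List Step | l.length = n}))
    fun _ _ h => Subtype.ext (Subtype.ext (congrArg Subtype.val h :))

def ofDecomposition : Unit ⊕ EvenMotzkinPath ⊕ (ℕ × EvenMotzkinPath × ℕ × EvenMotzkinPath) →
    EvenMotzkinPath
  | .inl _ => ⟨[], isEvenMotzkin_nil⟩
  | .inr (.inl w) => ⟨F :: w.1, isEvenMotzkin_F_cons.2 w.2⟩
  | .inr (.inr (j, c, k, w)) => ⟨arch j c.1 k w.1, isEvenMotzkin_arch c.2 w.2 j k⟩

lemma ofDecomposition_bijective : Function.Bijective ofDecomposition := by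
  constructor
  · rintro (_ | w | ⟨j, c, k, w⟩) (_ | w' | ⟨j', c', k', w'⟩) h <;>
      simp only [ofDecomposition, arch, Subtype.mk.injEq, reduceCtorEq, cons.injEq, false_and,
        true_and] at h
    · rfl
    · rw [Subtype.ext h]
    · obtain ⟨rfl, hc, rfl, hw⟩ := arch_inj c.2.1 c'.2.1 (by rw [arch, arch, h])
      rw [Subtype.ext hc, Subtype.ext hw]
  · rintro ⟨_ | ⟨x, v⟩, hv⟩
    · exact ⟨.inl (), rfl⟩
    · cases x with
      | F => exact ⟨.inr (.inl ⟨v, isEvenMotzkin_F_cons.1 hv⟩), rfl⟩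
      | D => exact absurd hv (not_isEvenMotzkin_D_cons v)
      | U =>
        obtain ⟨j, c, k, w, he, hc, hw⟩ := exists_arch_eq_U_cons hv
        exact ⟨.inr (.inr (j, ⟨c, hc⟩, k, ⟨w, hw⟩)), Subtype.ext he.symm⟩

def decompositionLength :
    Unit ⊕ EvenMotzkinPath ⊕ (ℕ × EvenMotzkinPath × ℕ × EvenMotzkinPath) → ℕ :=
  Sum.elim (fun _ => 0) <| Sum.elim (fun w => 1 + w.length) fun p =>
    4 + prodWeight id (prodWeight EvenMotzkinPath.length
      (prodWeight id EvenMotzkinPath.length)) p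

lemma length_ofDecomposition
    (x : Unit ⊕ EvenMotzkinPath ⊕ (ℕ × EvenMotzkinPath × ℕ × EvenMotzkinPath)) :
    (ofDecomposition x).length = decompositionLength x := by
  rcases x with _ | w | ⟨j, c, k, w⟩ <;>
    simp [ofDecomposition, decompositionLength, EvenMotzkinPath.length, prodWeight, arch] <;>
    omega

theorem weightGF_evenMotzkinPath_length :
    weightGF EvenMotzkinPath.length =
      1 + (X * weightGF EvenMotzkinPath.length +
        X ^ 4 * (mk 1 * (weightGF EvenMotzkinPath.length *
          (mk 1 * weightGF EvenMotzkinPath.length)))) := by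
  have hR := finiteFibres_evenMotzkinPath_length
  have hN : FiniteFibres (id : ℕ → ℕ) := finiteFibres_id
  conv_lhs => rw [weightGF_congr (Equiv.ofBijective _ ofDecomposition_bijective)
    length_ofDecomposition]
  rw [decompositionLength, weightGF_sumElim (fun _ => Subtype.finite) ((hR.const_add 1).sumElim
      ((hN.prod (hR.prod (hN.prod hR))).const_add 4)), weightGF_unit,
    weightGF_sumElim (hR.const_add 1) ((hN.prod (hR.prod (hN.prod hR))).const_add 4),
    weightGF_const_add, weightGF_const_add, pow_one, weightGF_prod hN (hR.prod (hN.prod hR)),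
    weightGF_prod hR (hN.prod hR), weightGF_prod hN hR, weightGF_id]

noncomputable def evenMotzkinGF : ℤ⟦X⟧ :=
  mk fun n => (Nat.card {w : List Step // w.length = n ∧ IsEvenMotzkin w} : ℤ)

lemma evenMotzkinGF_eq_weightGF : evenMotzkinGF = weightGF EvenMotzkinPath.length := by
  ext n
  rw [evenMotzkinGF, coeff_mk, coeff_weightGF]
  exact congrArg _ (Nat.card_congr ((Equiv.subtypeSubtypeEquivSubtypeInter _ _).trans
    (Equiv.subtypeEquivRight fun _ => and_comm))).symm

open PowerSeries in
theorem motzkin_even_peak_valley_gf :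
    ((X : ℤ⟦X⟧) - 1) ^ 2 +
      (X - 1) ^ 3 *
        (PowerSeries.mk fun n =>
          (Nat.card {w : List Step // w.length = n ∧ IsMotzkin w ∧
            (∀ h : ℤ, HasPeak w h → Even h) ∧ (∀ h : ℤ, HasValley w h → Even h)} : ℤ)) +
      X ^ 4 *
        (PowerSeries.mk fun n =>
          (Nat.card {w : List Step // w.length = n ∧ IsMotzkin w ∧
            (∀ h : ℤ, HasPeak w h → Even h) ∧ (∀ h : ℤ, HasValley w h → Even h)} : ℤ)) ^ 2 = 0 := by
  change (X - 1) ^ 2 + (X - 1) ^ 3 * evenMotzkinGF + X ^ 4 * evenMotzkinGF ^ 2 = 0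
  have hG := weightGF_evenMotzkinPath_length
  rw [← evenMotzkinGF_eq_weightGF] at hG
  linear_combination (-(1 - X) ^ 2) * hG +
    (-(X ^ 4 * evenMotzkinGF ^ 2 * (mk 1 * (1 - X) + 1))) * mk_one_mul_one_sub_eq_one ℤ
end

section
/- The generating function P(x) = Σ_{n≥0} a(n) x^n, where a(n) is the number of Motzkin paths of length n all of whose maximal upward-runs, downward-runs, and flat-runs have even length, satisfies 1 + (x-1)(x+1)P + x^4 P^2 = 0 as formal power series over ℤ. -/
open Step

/-- Every maximal run of `U`s, of `D`s, and of `F`s in `w` has even length. -/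
def AllRunsEven (w : List Step) : Prop :=
  ∀ k : ℕ, Odd k → ¬ HasRun w U k ∧ ¬ HasRun w D k ∧ ¬ HasRun w F k

/-!
A word has all its maximal runs of even length exactly when it arises from a word `v` by
doubling every letter, and doubling preserves and reflects the Motzkin condition. Hence the
restricted paths of length `2m` correspond to the Motzkin paths of length `m` and there are none
of odd length, i.e. `P(x) = M(x²)` for the Motzkin series `M`. Splitting a Motzkin path after its
first step (`F`, or `U` followed by its first return `D`) gives `M = 1 + xM + x²M²`, and
substituting `x²` yields `P = 1 + x²P + x⁴P²`.
-/

instance : Fintype Step :=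
  ⟨{U, D, F}, fun s => by cases s <;> simp⟩

namespace List

variable {α : Type*}

theorem prefix_or_eq_append_of_prefix_append {r l₁ l₂ : List α}
    (h : r <+: l₁ ++ l₂) : r <+: l₁ ∨ ∃ r', r = l₁ ++ r' ∧ r' <+: l₂ := by
  rcases le_or_gt r.length l₁.length with hle | hlt
  · exact .inl (prefix_of_prefix_length_le h (l₁.prefix_append l₂) hle)
  · obtain ⟨r', rfl⟩ := prefix_of_prefix_length_le (l₁.prefix_append l₂) h hlt.le
    exact .inr ⟨r', rfl, (prefix_append_right_inj l₁).1 h⟩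

def double : List α → List α
  | [] => []
  | a :: l => a :: a :: double l

@[simp] theorem double_nil : double ([] : List α) = [] := rfl

@[simp] theorem double_cons (a : α) (l : List α) : double (a :: l) = a :: a :: double l := rfl

@[simp] theorem length_double (l : List α) : (double l).length = 2 * l.length := by
  induction l with
  | nil => rfl
  | cons a l ih => simp [ih]; omega

@[simp] theorem double_append (l₁ l₂ : List α) : double (l₁ ++ l₂) = double l₁ ++ double l₂ := by
  induction l₁ with
  | nil => rfl
  | cons a l ih => simp [ih]

@[simp] theorem count_double [BEq α] (a : α) (l : List α) :
    (double l).count a = 2 * l.count a := by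
  induction l with
  | nil => rfl
  | cons b l ih => simp [count_cons, ih]; omega

theorem double_injective : Function.Injective (double : List α → List α) := by
  intro l₁
  induction l₁ with
  | nil => rintro (_ | _) h <;> simp_all
  | cons a l ih =>
    rintro (_ | ⟨b, l'⟩) h
    · simp at h
    · obtain ⟨rfl, -, h⟩ : a = b ∧ a = b ∧ double l = double l' := by simpa using h
      rw [ih h]

theorem prefix_double {p l : List α} (h : p <+: double l) :
    (∃ q, q <+: l ∧ p = double q) ∨ ∃ q a, q ++ [a] <+: l ∧ p = double q ++ [a] := by
  induction l generalizing p with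
  | nil => exact .inl ⟨[], by simp_all⟩
  | cons a l ih =>
    rcases p with _ | ⟨b, _ | ⟨c, p⟩⟩
    · exact .inl ⟨[], by simp⟩
    · obtain rfl : b = a := by simpa using h
      exact .inr ⟨[], b, by simp, rfl⟩
    · obtain ⟨rfl, rfl, hp⟩ : b = a ∧ c = a ∧ p <+: double l := by simpa using h
      rcases ih hp with ⟨q, hq, rfl⟩ | ⟨q, c, hq, rfl⟩
      · exact .inl ⟨_ :: q, by simpa using hq, rfl⟩
      · exact .inr ⟨_ :: q, c, by simpa using hq, rfl⟩

end List

theorem isMotzkin_nil : IsMotzkin [] :=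
  ⟨fun p hp => by simp [List.prefix_nil.1 hp], rfl⟩

theorem isMotzkin_cons_F {w : List Step} : IsMotzkin (F :: w) ↔ IsMotzkin w := by
  simp only [IsMotzkin, List.prefix_cons_iff, List.count_cons]
  constructor
  · rintro ⟨hp, hc⟩
    exact ⟨fun p hp' => by simpa using hp (F :: p) (.inr ⟨p, rfl, hp'⟩), by simpa using hc⟩
  · rintro ⟨hp, hc⟩
    refine ⟨?_, by simpa using hc⟩
    rintro _ (rfl | ⟨p, rfl, hp'⟩)
    · simp
    · simpa using hp p hp'

theorem not_isMotzkin_cons_D (w : List Step) : ¬ IsMotzkin (D :: w) :=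
  fun h => by simpa using h.1 [D] ⟨w, rfl⟩

theorem IsMotzkin.U_append_D {w₁ w₂ : List Step} (h₁ : IsMotzkin w₁) (h₂ : IsMotzkin w₂) :
    IsMotzkin (U :: w₁ ++ D :: w₂) := by
  refine ⟨fun p hp => ?_, by simp [h₁.2, h₂.2]; omega⟩
  rw [List.cons_append, List.prefix_cons_iff] at hp
  obtain rfl | ⟨p, rfl, hp⟩ := hp
  · simp
  rcases List.prefix_or_eq_append_of_prefix_append hp with hp | ⟨r, rfl, hr⟩
  · simpa [List.count_cons] using (h₁.1 p hp).trans (Nat.le_succ _)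
  rw [List.prefix_cons_iff] at hr
  obtain rfl | ⟨r, rfl, hr⟩ := hr
  · simp [h₁.2]
  · simp [h₁.2]
    have := h₂.1 r hr
    omega

/-- First-return decomposition: the shortest prefix with more `D`s than `U`s is `p ++ [D]`
with `p` a Motzkin word. -/
theorem exists_eq_isMotzkin_append_D {t : List Step} (h : t.count U < t.count D) :
    ∃ p q, t = p ++ D :: q ∧ IsMotzkin p := by
  obtain ⟨p₀, ⟨hp₀t, hp₀⟩, hmin⟩ := (measure List.length).wf.has_min
    {r | r <+: t ∧ r.count U < r.count D} ⟨t, List.prefix_rfl, h⟩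
  obtain rfl | ⟨p, s, rfl⟩ := p₀.eq_nil_or_concat'
  · simp at hp₀
  have hpre : ∀ r, r <+: p → r.count D ≤ r.count U := fun r hr => by
    by_contra! hlt
    refine hmin r ⟨hr.trans ((List.prefix_append _ _).trans hp₀t), hlt⟩ ?_
    show r.length < (p ++ [s]).length
    simpa using Nat.lt_succ_of_le hr.length_le
  have hp := hpre p List.prefix_rfl
  obtain rfl : s = D := by cases s <;> simp at hp₀ ⊢ <;> omega
  obtain ⟨q, rfl⟩ := hp₀t
  exact ⟨p, q, by simp, hpre, by simp at hp₀; omega⟩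

theorem IsMotzkin.exists_eq_U_append_D {t : List Step} (h : IsMotzkin (U :: t)) :
    ∃ w₁ w₂, t = w₁ ++ D :: w₂ ∧ IsMotzkin w₁ ∧ IsMotzkin w₂ := by
  obtain ⟨w₁, w₂, rfl, h₁⟩ :=
    exists_eq_isMotzkin_append_D (t := t) (by have := h.2; simp at this; omega)
  refine ⟨w₁, w₂, rfl, h₁, fun r hr => ?_, ?_⟩
  · have := h.1 (U :: w₁ ++ D :: r) (by simpa using hr)
    simp [h₁.2] at this
    omega
  · have := h.2
    simp [h₁.2] at this
    omega

theorem IsMotzkin.append_D_inj {w₁ w₂ v₁ v₂ : List Step} (hw : IsMotzkin w₁)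
    (hv : IsMotzkin v₁) (h : w₁ ++ D :: w₂ = v₁ ++ D :: v₂) : w₁ = v₁ ∧ w₂ = v₂ := by
  have shorter : ∀ a b c d : List Step, IsMotzkin a → IsMotzkin c →
      a ++ D :: b = c ++ D :: d → ¬ a.length < c.length := fun a b c d ha hc he hlt => by
    have hpre : a ++ [D] <+: c :=
      List.prefix_of_prefix_length_le (l₃ := c ++ D :: d) (by simp [← he])
        (List.prefix_append _ _) (by simpa)
    simpa [ha.2] using hc.1 _ hpre
  have hlen : w₁.length = v₁.length := by
    have := shorter _ _ _ _ hw hv h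
    have := shorter _ _ _ _ hv hw h.symm
    omega
  obtain ⟨rfl, h'⟩ := List.append_inj h hlen
  exact ⟨rfl, List.cons_injective h'⟩

abbrev MotzkinPath (n : ℕ) : Type := {w : List Step // w.length = n ∧ IsMotzkin w}

instance (n : ℕ) : Finite (MotzkinPath n) :=
  ((List.finite_length_eq Step n).subset fun _ h => h.1).to_subtype

theorem motzkinNum_zero : motzkinNum 0 = 1 :=
  Nat.card_eq_one_iff_exists.2
    ⟨⟨[], rfl, isMotzkin_nil⟩, fun w => Subtype.ext (List.eq_nil_of_length_eq_zero w.2.1)⟩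

theorem motzkinNum_one : motzkinNum 1 = 1 := by
  refine Nat.card_eq_one_iff_exists.2 ⟨⟨[F], rfl, isMotzkin_cons_F.2 isMotzkin_nil⟩, ?_⟩
  rintro ⟨w, hl, hw⟩
  obtain ⟨s, rfl⟩ := List.length_eq_one_iff.1 hl
  cases s
  · simpa using hw.2
  · exact absurd hw (not_isMotzkin_cons_D [])
  · rfl

section
open Finset

def motzkinPathCons (n : ℕ) :
    MotzkinPath (n + 1) ⊕ (Σ p : antidiagonal n, MotzkinPath p.1.1 × MotzkinPath p.1.2) →
      MotzkinPath (n + 2)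
  | .inl w => ⟨F :: w.1, by simp [w.2.1], isMotzkin_cons_F.2 w.2.2⟩
  | .inr ⟨p, w₁, w₂⟩ => ⟨U :: w₁.1 ++ D :: w₂.1,
      by simp [w₁.2.1, w₂.2.1, ← mem_antidiagonal.1 p.2]; omega,
      w₁.2.2.U_append_D w₂.2.2⟩

theorem motzkinPathCons_bijective (n : ℕ) : Function.Bijective (motzkinPathCons n) := by
  constructor
  · rintro (⟨v, _, _⟩ | ⟨p, ⟨v₁, hv₁l, hv₁⟩, ⟨v₂, hv₂l, _⟩⟩)
      (⟨w, _, _⟩ | ⟨q, ⟨w₁, hw₁l, hw₁⟩, ⟨w₂, hw₂l, _⟩⟩) h <;>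
      simp only [motzkinPathCons, Subtype.mk.injEq, List.cons_append, List.cons.injEq,
        reduceCtorEq, false_and] at h
    · obtain ⟨-, rfl⟩ := h
      rfl
    · obtain ⟨rfl, rfl⟩ := hv₁.append_D_inj hw₁ h.2
      obtain rfl : p = q := Subtype.ext (Prod.ext (hv₁l.symm.trans hw₁l) (hv₂l.symm.trans hw₂l))
      rfl
  · rintro ⟨w, hl, hw⟩
    obtain _ | ⟨_ | _ | _, t⟩ := w
    · simp at hl
    · obtain ⟨w₁, w₂, rfl, h₁, h₂⟩ := hw.exists_eq_U_append_D
      refine ⟨.inr ⟨⟨(w₁.length, w₂.length), ?_⟩, ⟨w₁, rfl, h₁⟩, ⟨w₂, rfl, h₂⟩⟩, rfl⟩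
      simp only [List.length_cons, List.length_append, HasAntidiagonal.mem_antidiagonal] at hl ⊢
      omega
    · exact absurd hw (not_isMotzkin_cons_D t)
    · exact ⟨.inl ⟨t, by simpa using hl, isMotzkin_cons_F.1 hw⟩, rfl⟩

theorem motzkinNum_add_two (n : ℕ) :
    motzkinNum (n + 2) =
      motzkinNum (n + 1) + ∑ p ∈ antidiagonal n, motzkinNum p.1 * motzkinNum p.2 := by
  rw [motzkinNum, ← Nat.card_congr (Equiv.ofBijective _ (motzkinPathCons_bijective n)),
    Nat.card_sum, Nat.card_sigma]
  simp only [Nat.card_prod]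
  exact congrArg _ (sum_coe_sort _ fun p : ℕ × ℕ => motzkinNum p.1 * motzkinNum p.2)

end

theorem isMotzkin_double_iff {v : List Step} : IsMotzkin v.double ↔ IsMotzkin v := by
  refine ⟨fun ⟨hp, hc⟩ => ⟨fun q ⟨r, hr⟩ => ?_, by simpa using hc⟩,
    fun ⟨hp, hc⟩ => ⟨fun p hpre => ?_, by simpa using hc⟩⟩
  · simpa [← hr] using hp q.double ⟨r.double, by simp [← hr]⟩
  · rcases List.prefix_double hpre with ⟨q, hq, rfl⟩ | ⟨q, s, hq, rfl⟩
    · simpa using hp q hq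
    · have hqs := hp _ hq
      have hq := hp q ((List.prefix_append _ _).trans hq)
      cases s <;> simp at hqs ⊢ <;> omega

theorem allRunsEven_iff_forall {w : List Step} :
    AllRunsEven w ↔ ∀ s k, Odd k → ¬ HasRun w s k := by
  refine ⟨fun h s k hk => ?_, fun h k hk => ⟨h U k hk, h D k hk, h F k hk⟩⟩
  cases s
  exacts [(h k hk).1, (h k hk).2.1, (h k hk).2.2]

theorem hasRun_cons_one {s : Step} {t : List Step} (h : t.head? ≠ some s) :
    HasRun (s :: t) s 1 :=
  ⟨[], t, by simp, by simp, h⟩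

theorem HasRun.of_cons_cons {s c : Step} {t : List Step} {k : ℕ} (hk : Odd k)
    (h : HasRun (s :: s :: t) c k) : ∃ j, Odd j ∧ HasRun t c j := by
  obtain ⟨a, b, he, ha, hb⟩ := h
  obtain ⟨k, rfl⟩ : ∃ j, k = j + 1 := ⟨k - 1, by have := hk.pos; omega⟩
  rcases a with _ | ⟨x, _ | ⟨y, a⟩⟩
  · rcases k with _ | k
    · obtain ⟨rfl, rfl⟩ : s = c ∧ s :: t = b := by simpa using he
      simp at hb
    · obtain ⟨rfl, rfl⟩ : s = c ∧ t = List.replicate k c ++ b := by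
        simpa [List.replicate_succ] using he
      exact ⟨k, by simpa [parity_simps] using hk, [], b, by simp, by simp, hb⟩
  · obtain ⟨rfl, rfl, -⟩ : s = x ∧ s = c ∧ t = List.replicate k c ++ b := by
      simpa [List.replicate_succ] using he
    simp at ha
  · obtain ⟨-, -, rfl⟩ : s = x ∧ s = y ∧ t = a ++ (List.replicate (k + 1) c ++ b) := by
      simpa using he
    refine ⟨k + 1, hk, a, b, by simp, fun h' => ha ?_, hb⟩
    rw [show x :: y :: a = [x, y] ++ a from rfl, List.getLast?_append, h']
    rfl

theorem HasRun.cons_cons {s c : Step} {t : List Step} {k : ℕ} (hk : Odd k)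
    (h : HasRun t c k) : ∃ j, Odd j ∧ HasRun (s :: s :: t) c j := by
  obtain ⟨a, b, rfl, ha, hb⟩ := h
  rcases a with _ | ⟨x, a⟩
  · by_cases hsc : s = c
    · subst hsc
      exact ⟨k + 2, hk.add_even even_two, [], b, rfl, by simp, hb⟩
    · exact ⟨k, hk, [s, s], b, by simp, by simp [hsc], hb⟩
  · exact ⟨k, hk, s :: s :: x :: a, b, by simp, by simpa [List.getLast?_cons_cons] using ha, hb⟩

theorem allRunsEven_cons_cons {s : Step} {t : List Step} :
    AllRunsEven (s :: s :: t) ↔ AllRunsEven t := by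
  simp only [allRunsEven_iff_forall]
  refine ⟨fun h c k hk hr => ?_, fun h c k hk hr => ?_⟩
  · obtain ⟨j, hj, hr⟩ := hr.cons_cons (s := s) hk
    exact h c j hj hr
  · obtain ⟨j, hj, hr⟩ := hr.of_cons_cons hk
    exact h c j hj hr

theorem allRunsEven_double (v : List Step) : AllRunsEven v.double := by
  induction v with
  | nil =>
    refine allRunsEven_iff_forall.2 fun c k hk ⟨a, b, he, _, _⟩ => ?_
    have := congrArg List.length he
    simp only [List.double_nil, List.length_nil, List.length_append, List.length_replicate] at this
    exact hk.pos.ne' (by omega)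
  | cons s v ih => exact allRunsEven_cons_cons.2 ih

theorem AllRunsEven.exists_double :
    ∀ {w : List Step}, AllRunsEven w → ∃ v : List Step, v.double = w
  | [], _ => ⟨[], rfl⟩
  | [s], h => absurd (hasRun_cons_one (by simp)) (allRunsEven_iff_forall.1 h s 1 odd_one)
  | s :: s' :: t, h => by
    by_cases hs : s' = s
    · subst hs
      obtain ⟨v, rfl⟩ := (allRunsEven_cons_cons.1 h).exists_double
      exact ⟨s' :: v, rfl⟩
    · exact absurd (hasRun_cons_one (by simpa using hs)) (allRunsEven_iff_forall.1 h s 1 odd_one)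

noncomputable def motzkinPathDoubleEquiv (m : ℕ) :
    MotzkinPath m ≃ {w : List Step // w.length = 2 * m ∧ IsMotzkin w ∧ AllRunsEven w} :=
  Equiv.ofBijective
    (fun v => ⟨v.1.double, by simp [v.2.1], isMotzkin_double_iff.2 v.2.2, allRunsEven_double _⟩)
    ⟨fun _ _ h => Subtype.ext (List.double_injective (congrArg Subtype.val h)),
      fun ⟨_, hl, hw, he⟩ => by
        obtain ⟨v, rfl⟩ := he.exists_double
        exact ⟨⟨v, by simpa using hl, isMotzkin_double_iff.1 hw⟩, rfl⟩⟩

theorem card_allRunsEven_motzkin (n : ℕ) :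
    Nat.card {w : List Step // w.length = n ∧ IsMotzkin w ∧ AllRunsEven w} =
      if 2 ∣ n then motzkinNum (n / 2) else 0 := by
  split_ifs with hn
  · obtain ⟨m, rfl⟩ := hn
    rw [Nat.mul_div_cancel_left m two_pos]
    exact (Nat.card_congr (motzkinPathDoubleEquiv m)).symm
  · refine @Nat.card_of_isEmpty _ ⟨fun ⟨w, hl, _, he⟩ => hn ?_⟩
    obtain ⟨v, rfl⟩ := he.exists_double
    exact ⟨v.length, by simpa using hl.symm⟩

section GeneratingFunction

open PowerSeries

noncomputable def motzkinSeries (R : Type*) [Semiring R] : R⟦X⟧ :=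
  mk fun n => (motzkinNum n : R)

theorem motzkinSeries_eq (R : Type*) [CommSemiring R] :
    motzkinSeries R = 1 + X * motzkinSeries R + X ^ 2 * motzkinSeries R ^ 2 := by
  ext (_ | _ | n) <;>
    simp only [motzkinSeries, map_add, coeff_one, coeff_zero_X_mul, coeff_succ_X_mul,
      coeff_X_pow_mul', coeff_mk]
  · simp [motzkinNum_zero]
  · simp [motzkinNum_zero, motzkinNum_one]
  · simp [motzkinNum_add_two, sq, coeff_mul]

theorem mk_card_allRunsEven_motzkin (R : Type*) [CommRing R] :
    (mk fun n => (Nat.card {w : List Step // w.length = n ∧ IsMotzkin w ∧ AllRunsEven w} : R)) =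
      expand 2 two_ne_zero (motzkinSeries R) := by
  ext n
  rw [coeff_mk, coeff_expand, card_allRunsEven_motzkin]
  split_ifs <;> simp [motzkinSeries]

end GeneratingFunction

open PowerSeries in
theorem motzkin_even_runs_gf :
    1 + ((X : ℤ⟦X⟧) - 1) * (X + 1) *
        (PowerSeries.mk fun n =>
          (Nat.card {w : List Step // w.length = n ∧ IsMotzkin w ∧ AllRunsEven w} : ℤ)) +
      X ^ 4 *
        (PowerSeries.mk fun n =>
          (Nat.card {w : List Step // w.length = n ∧ IsMotzkin w ∧ AllRunsEven w} : ℤ)) ^ 2 = 0 := by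
  have h := congrArg (expand 2 two_ne_zero) (motzkinSeries_eq ℤ)
  simp only [map_add, map_mul, map_pow, map_one, expand_X] at h
  rw [mk_card_allRunsEven_motzkin]
  linear_combination -h
end

section
/- If the formal power series P over ℚ satisfies P = 1 + xP + x^2 P^2 and has constant term 1, then P is unique; moreover its coefficient sequence satisfies (n+2)·a(n) = (2n+1)·a(n-1) + 3(n-1)·a(n-2) for n ≥ 2, with a(0) = a(1) = 1. -/
/-! Two solutions `P`, `Q` satisfy `(Q - P) * (1 - X - X² (Q + P)) = 0`, and the second factor is a
unit. Differentiating the equation and eliminating `P²` with it gives the linear differential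
equation `(1 - 2X - 3X²) · X P' = (3X² + 3X - 2) P + 2`; comparing coefficients yields the
recurrence. -/

open PowerSeries

namespace PowerSeries

variable {R : Type*} [CommRing R]

theorem eq_of_eq_one_add_X_mul_add_X_sq_mul_sq {P Q : R⟦X⟧}
    (hP : P = 1 + X * P + X ^ 2 * P ^ 2) (hQ : Q = 1 + X * Q + X ^ 2 * Q ^ 2) : Q = P := by
  have hunit : IsUnit (1 - X - X ^ 2 * (Q + P)) := by
    rw [isUnit_iff_constantCoeff]
    simp
  have hzero : (Q - P) * (1 - X - X ^ 2 * (Q + P)) = 0 := by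
    linear_combination hQ - hP
  exact sub_eq_zero.mp (hunit.mul_left_eq_zero.mp hzero)

theorem coeff_X_mul_derivative (f : R⟦X⟧) (n : ℕ) :
    coeff n (X * d⁄dX R f) = n * coeff n f := by
  cases n with
  | zero => simp
  | succ n => rw [coeff_succ_X_mul, coeff_derivative, mul_comm]; push_cast; ring

theorem X_mul_derivative_of_eq_one_add_X_mul_add_X_sq_mul_sq {P : R⟦X⟧}
    (hP : P = 1 + X * P + X ^ 2 * P ^ 2) :
    (1 - 2 * X - 3 * X ^ 2) * (X * d⁄dX R P) = (3 * X ^ 2 + 3 * X - 2) * P + 2 := by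
  have hsq : X ^ 2 * P ^ 2 = (1 - X) * P - 1 := by linear_combination -hP
  have hderiv : d⁄dX R P = P + X * d⁄dX R P + 2 * X * P ^ 2 + 2 * X ^ 2 * P * d⁄dX R P := by
    conv_lhs => rw [hP]
    simp only [map_add, Derivation.leibniz, Derivation.leibniz_pow, derivative_X,
      Derivation.map_one_eq_zero, smul_eq_mul]
    ring
  linear_combination (X * (1 - X - 2 * X ^ 2 * P)) * hderiv -
    (4 * X ^ 3 * d⁄dX R P + 4 * X ^ 2 * P + 2) * hsq

theorem coeff_add_two_of_differential_eq {P : R⟦X⟧}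
    (h : (1 - 2 * X - 3 * X ^ 2) * (X * d⁄dX R P) = (3 * X ^ 2 + 3 * X - 2) * P + 2) (n : ℕ) :
    ((n : R) + 4) * coeff (n + 2) P =
      (2 * (n : R) + 5) * coeff (n + 1) P + 3 * ((n : R) + 1) * coeff n P := by
  have hn := congrArg (coeff (n + 2)) h
  -- keep `X * P'` opaque, so that `simp` does not peel its `X` off against `coeff_succ_X_mul`
  generalize hD : X * d⁄dX R P = D at hn
  have hDcoeff (k : ℕ) : coeff k D = k * coeff k P := hD ▸ coeff_X_mul_derivative P k
  rw [← map_ofNat C 2, ← map_ofNat C 3] at hn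
  simp only [sub_mul, add_mul, mul_assoc, map_sub, map_add, coeff_C_mul, coeff_succ_X_mul,
    coeff_X_pow_mul, one_mul, coeff_C, hDcoeff] at hn
  push_cast at hn
  linear_combination hn

end PowerSeries

theorem motzkin_series_unique_and_recurrence_general (P : ℚ⟦X⟧)
    (hP : P = 1 + X * P + X ^ 2 * P ^ 2) :
    (∀ Q : ℚ⟦X⟧, Q = 1 + X * Q + X ^ 2 * Q ^ 2 → constantCoeff Q = 1 → Q = P) ∧
      coeff 0 P = 1 ∧ coeff 1 P = 1 ∧
      ∀ n : ℕ, 2 ≤ n →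
        ((n : ℚ) + 2) * coeff n P =
          (2 * (n : ℚ) + 1) * coeff (n - 1) P + 3 * ((n : ℚ) - 1) * coeff (n - 2) P := by
  have h0 : coeff 0 P = 1 := by
    rw [hP]
    simp
  have h1 : coeff 1 P = 1 := by
    rw [hP, map_add, map_add, coeff_succ_X_mul, coeff_X_pow_mul']
    simp [h0]
  refine ⟨fun Q hQ _ => eq_of_eq_one_add_X_mul_add_X_sq_mul_sq hP hQ, h0, h1, ?_⟩
  intro n hn
  obtain ⟨m, rfl⟩ := Nat.exists_eq_add_of_le' hn
  have hrec := coeff_add_two_of_differential_eq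
    (X_mul_derivative_of_eq_one_add_X_mul_add_X_sq_mul_sq hP) m
  simp only [Nat.add_sub_cancel, Nat.add_succ_sub_one]
  push_cast
  linear_combination hrec

theorem motzkin_series_unique_and_recurrence (P : ℚ⟦X⟧)
    (hP : P = 1 + X * P + X ^ 2 * P ^ 2) (hP0 : constantCoeff P = 1) :
    (∀ Q : ℚ⟦X⟧, Q = 1 + X * Q + X ^ 2 * Q ^ 2 → constantCoeff Q = 1 → Q = P) ∧
      coeff 0 P = 1 ∧ coeff 1 P = 1 ∧
      ∀ n : ℕ, 2 ≤ n →
        ((n : ℚ) + 2) * coeff n P =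
          (2 * (n : ℚ) + 1) * coeff (n - 1) P + 3 * ((n : ℚ) - 1) * coeff (n - 2) P :=
  motzkin_series_unique_and_recurrence_general P hP
end
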